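/- Let V be a vector space over ℂ, let Vₕ ⊆ V be a ℂ-linear subspace, and let A : V × V → ℂ be additive in its first argument. Let N, N₊ : V → ℝ be nonnegative functions such that: N satisfies the triangle inequality N(x+y) ≤ N(x)+N(y); N(x) ≤ N₊(x) for all x ∈ V; N(w)² = Im(A(w,w)) for every w ∈ Vₕ; and |A(w,v)| ≤ (1/2)·N₊(w)·N(v) for every w ∈ V and v ∈ Vₕ. Suppose u ∈ V and uₕ ∈ Vₕ satisfy A(u,v) = A(uₕ,v) for all v ∈ Vₕ. Then for every vₕ ∈ Vₕ one has N(u − uₕ) ≤ (3/2)·N₊(u − vₕ); in particular N(u − uₕ) ≤ (3/2)·inf over vₕ ∈ Vₕ of N₊(u − vₕ). -/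

import Mathlib

/-- Abstract quasi-optimality (Lemma 4) for the modified TDG method:
`N (u - uₕ) ≤ (3/2) * N₊ (u - vₕ)` for every discrete `vₕ`, and hence
`N (u - uₕ) ≤ (3/2) * inf_{vₕ ∈ Vₕ} N₊ (u - vₕ)`. -/
theorem stmt_1 {V : Type*} [AddCommGroup V] [Module ℂ V]
    (Vh : Submodule ℂ V) (A : V → V → ℂ)
    (hA_add : ∀ x y v : V, A (x + y) v = A x v + A y v)
    (N Np : V → ℝ)
    (hN_nonneg : ∀ x, 0 ≤ N x) (hNp_nonneg : ∀ x, 0 ≤ Np x)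
    (hN_triangle : ∀ x y : V, N (x + y) ≤ N x + N y)
    (hN_le_Np : ∀ x : V, N x ≤ Np x)
    (h_coercive : ∀ w ∈ Vh, (N w) ^ 2 = (A w w).im)
    (h_continuous : ∀ w : V, ∀ v ∈ Vh,
      ‖A w v‖ ≤ (1 / 2) * Np w * N v)
    (u uh : V) (huh : uh ∈ Vh)
    (h_galerkin : ∀ v ∈ Vh, A u v = A uh v) :
    (∀ vh ∈ Vh, N (u - uh) ≤ (3 / 2) * Np (u - vh)) ∧
      N (u - uh) ≤ (3 / 2) * ⨅ vh : Vh, Np (u - (vh : V)) := by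
  have hsub : ∀ x y v : V, A (x - y) v = A x v - A y v := by
    intro x y v
    have h1 := hA_add (x - y) y v
    simp at h1
    rw [h1]; ring
  have key : ∀ vh ∈ Vh, N (u - uh) ≤ (3 / 2) * Np (u - vh) := by
    intro vh hvh
    -- bound N (vh - uh)
    have hmem : vh - uh ∈ Vh := sub_mem hvh huh
    have hAeq : A (vh - uh) (vh - uh) = A (vh - u) (vh - uh) := by
      rw [hsub, hsub, h_galerkin _ hmem]
    have himle : (N (vh - uh)) ^ 2 ≤ (1 / 2) * Np (u - vh) * N (vh - uh) := by
      rw [h_coercive _ hmem, hAeq]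
      have hneg : A (vh - u) (vh - uh) = - A (u - vh) (vh - uh) := by
        rw [hsub, hsub]; ring
      calc (A (vh - u) (vh - uh)).im ≤ ‖A (vh - u) (vh - uh)‖ :=
            Complex.im_le_norm _
        _ = ‖A (u - vh) (vh - uh)‖ := by rw [hneg, norm_neg]
        _ ≤ (1 / 2) * Np (u - vh) * N (vh - uh) := h_continuous _ _ hmem
    have hbd : N (vh - uh) ≤ (1 / 2) * Np (u - vh) := by
      rcases (hN_nonneg (vh - uh)).lt_or_eq with h | h
      · nlinarith
      · rw [← h]; exact mul_nonneg (by norm_num) (hNp_nonneg _)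
    have htri : N (u - uh) ≤ N (u - vh) + N (vh - uh) := by
      have := hN_triangle (u - vh) (vh - uh)
      simpa using this
    have := hN_le_Np (u - vh)
    linarith
  refine ⟨key, ?_⟩
  have hne : Nonempty Vh := ⟨0⟩
  have hinf : (2 / 3) * N (u - uh) ≤ ⨅ vh : Vh, Np (u - (vh : V)) := by
    apply le_ciInf
    intro vh
    have := key vh vh.2
    linarith
  linarith
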